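/- arXiv:2311.12231 — 2 statements merged into one kernel-verified Lean document; each statement's English description precedes it below -/
import Mathlib

section
/- Let B be the unit ball of a Minkowski norm on an n-dimensional real vector space V, and let 𝒰 ⊂ Gr_k V be a nonempty connected open set. Suppose that B is locally cylindrical near X for every X ∈ 𝒰. Then there exists a single k-cylinder C such that B ∩ X = C ∩ X for all X ∈ 𝒰. -/
open Module Set Pointwise

/-- The Grassmannian of `k`-dimensional linear subspaces of `V`. -/
abbrev Gr (k : ℕ) (V : Type*) [AddCommGroup V] [Module ℝ V] :=
  {X : Submodule ℝ V // Module.finrank ℝ X = k}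

/-- The standard (quotient) topology on the Grassmannian, coinduced from the space of
linearly independent `k`-tuples of vectors. -/
noncomputable instance grTop (k : ℕ) (V : Type*) [AddCommGroup V] [Module ℝ V]
    [TopologicalSpace V] : TopologicalSpace (Gr k V) :=
  TopologicalSpace.coinduced
    (fun v : {v : Fin k → V // LinearIndependent ℝ v} =>
      (⟨Submodule.span ℝ (Set.range v.1), by
          rw [finrank_span_eq_card v.2, Fintype.card_fin]⟩ : Gr k V))
    inferInstance

/-- A convex body: a compact convex set with nonempty interior. -/
def IsConvexBody {V : Type*} [AddCommGroup V] [Module ℝ V] [TopologicalSpace V]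
    (B : Set V) : Prop :=
  IsCompact B ∧ Convex ℝ B ∧ (interior B).Nonempty

/-- `C` is a `k`-cylinder with base `K` lying in the `k`-dimensional subspace `X`:
`K` is a `k`-dimensional convex body in `X` and `C = K + Y` for some complement `Y` of `X`. -/
def IsCylinderWithBase {V : Type*} [AddCommGroup V] [Module ℝ V] [TopologicalSpace V]
    (k : ℕ) (C K : Set V) (X : Submodule ℝ V) : Prop :=
  Module.finrank ℝ X = k ∧ K ⊆ (X : Set V) ∧ IsCompact K ∧ Convex ℝ K ∧
    (interior ((↑) ⁻¹' K : Set X)).Nonempty ∧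
    ∃ Y : Submodule ℝ V, IsCompl X Y ∧ C = K + (Y : Set V)

/-- `C` is a `k`-cylinder. -/
def IsCylinder {V : Type*} [AddCommGroup V] [Module ℝ V] [TopologicalSpace V]
    (k : ℕ) (C : Set V) : Prop :=
  ∃ (K : Set V) (X : Submodule ℝ V), IsCylinderWithBase k C K X

/-- Two sets coincide near a subspace `X`. -/
def CoincideNear {V : Type*} [AddCommGroup V] [Module ℝ V] [TopologicalSpace V]
    (B₁ B₂ : Set V) (X : Submodule ℝ V) : Prop :=
  ∃ U : Set V, IsOpen U ∧ (X : Set V) ⊆ U ∧ B₁ ∩ U = B₂ ∩ U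

/-- `B` is locally cylindrical near `X`. -/
def IsLocallyCylindricalNear {V : Type*} [AddCommGroup V] [Module ℝ V] [TopologicalSpace V]
    (k : ℕ) (B : Set V) (X : Submodule ℝ V) : Prop :=
  ∃ C : Set V, IsCylinder k C ∧ CoincideNear B C X

/-- A Minkowski seminorm: nonnegative, positively 1-homogeneous and subadditive. -/
def IsMinkowskiSeminorm {V : Type*} [AddCommGroup V] [Module ℝ V] (Φ : V → ℝ) : Prop :=
  (∀ v, 0 ≤ Φ v) ∧ (∀ (c : ℝ) (v : V), 0 ≤ c → Φ (c • v) = c * Φ v) ∧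
    ∀ v w, Φ (v + w) ≤ Φ v + Φ w

/-- A Minkowski norm: a Minkowski seminorm positive outside the origin. -/
def IsMinkowskiNorm {V : Type*} [AddCommGroup V] [Module ℝ V] (Φ : V → ℝ) : Prop :=
  IsMinkowskiSeminorm Φ ∧ ∀ v : V, v ≠ 0 → 0 < Φ v

/-- `X` is `Φ`-contracting with contracting direction `Y`. -/
def IsContractingWithDirection {V : Type*} [AddCommGroup V] [Module ℝ V]
    (Φ : V → ℝ) (X Y : Submodule ℝ V) : Prop :=
  ∃ h : IsCompl X Y, ∀ v : V, Φ (X.linearProjOfIsCompl Y h v : V) ≤ Φ v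

/-- `X` is `Φ`-contracting: there is a linear projector of `V` onto `X`
that does not increase `Φ`. -/
def IsContracting {V : Type*} [AddCommGroup V] [Module ℝ V]
    (Φ : V → ℝ) (X : Submodule ℝ V) : Prop :=
  ∃ P : V →ₗ[ℝ] V, P ∘ₗ P = P ∧ LinearMap.range P = X ∧ ∀ v, Φ (P v) ≤ Φ v

/-- `K` is a 0-centered ellipsoid in the subspace `X`: the unit ball of an
inner product norm on `X`. -/
def IsEllipsoidIn {V : Type*} [AddCommGroup V] [Module ℝ V]
    (X : Submodule ℝ V) (K : Set V) : Prop :=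
  ∃ Q : QuadraticForm ℝ X, Q.PosDef ∧ K = (↑) '' {x : X | Q x ≤ 1}

/-! If `B` is bounded and contains `0`, a `k`-cylinder coinciding with `B` near a `k`-dimensional
subspace `X` must be `(B ∩ X) + Y` for a complement `Y` of `X`, and `Y` is determined: a direction
of a second such cylinder that is not in `Y` would, after projecting to `X` along `Y`, translate the
bounded set `B ∩ X` into itself. Conversely, if `B` coincides with `(B ∩ X) + Y` near `X`, it still
does near every `X'` close to `X`: such an `X'` is the graph of a small linear map `X → Y`, so the
points of `X'` whose projection `P` to `X` along `Y` lies in the compact set `closure (P '' B)`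
stay close to `X`, and both sets avoid all other points of `X'`. Hence the subspaces near which
`B` coincides with a given cylinder form an open set, these sets are disjoint for distinct
cylinders, and on the connected set `𝒰` a single cylinder remains. -/

open Bornology Filter Metric Submodule Topology

section

variable {V : Type*} [NormedAddCommGroup V] [NormedSpace ℝ V]

theorem eq_zero_of_forall_add_mem {S : Set V} (hS : IsBounded S) (h0 : 0 ∈ S) {a : V}
    (ha : ∀ x ∈ S, x + a ∈ S) : a = 0 := by
  have hmem : ∀ n : ℕ, n • a ∈ S := fun n ↦ by
    induction n with
    | zero => simpa using h0
    | succ n ih => simpa [succ_nsmul] using ha _ ih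
  obtain ⟨R, hR⟩ := hS.exists_norm_le
  by_contra ha0
  obtain ⟨n, hn⟩ := exists_nat_gt (R / ‖a‖)
  have := hR _ (hmem n)
  rw [RCLike.norm_nsmul ℝ, nsmul_eq_mul] at this
  rw [div_lt_iff₀ (norm_pos_iff.2 ha0)] at hn
  linarith

namespace IsMinkowskiNorm

variable {Φ : V → ℝ}

theorem map_zero (hΦ : IsMinkowskiNorm Φ) : Φ 0 = 0 := by
  simpa using hΦ.1.2.1 0 0 le_rfl

theorem convexOn (hΦ : IsMinkowskiNorm Φ) : ConvexOn ℝ univ Φ := by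
  refine ⟨convex_univ, fun x _ y _ a b ha hb _ ↦ ?_⟩
  simpa only [smul_eq_mul, hΦ.1.2.1 a x ha, hΦ.1.2.1 b y hb] using hΦ.1.2.2 (a • x) (b • y)

theorem isBounded_setOf_le_one [FiniteDimensional ℝ V] (hΦ : IsMinkowskiNorm Φ) :
    IsBounded {v | Φ v ≤ 1} := by
  have hcont : Continuous Φ := continuousOn_univ.1 (hΦ.convexOn.continuousOn isOpen_univ)
  obtain ⟨m, hm, hmΦ⟩ := (isCompact_sphere (0 : V) 1).exists_forall_le' hcont.continuousOn
    (a := 0) fun v hv ↦ hΦ.2 v (ne_zero_of_mem_unit_sphere ⟨v, hv⟩)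
  refine isBounded_iff_forall_norm_le.2 ⟨m⁻¹, fun v (hv : Φ v ≤ 1) ↦ ?_⟩
  rcases eq_or_ne v 0 with rfl | hv0
  · simp [hm.le]
  have hnorm : 0 < ‖v‖ := norm_pos_iff.2 hv0
  have hsphere : ‖v‖⁻¹ • v ∈ sphere (0 : V) 1 := by
    simp [norm_smul, hnorm.ne']
  have : ‖v‖ * m ≤ Φ v := by
    calc ‖v‖ * m ≤ ‖v‖ * Φ (‖v‖⁻¹ • v) := by gcongr; exact hmΦ _ hsphere
      _ = Φ v := by rw [← hΦ.1.2.1 _ _ hnorm.le, smul_inv_smul₀ hnorm.ne']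
  rw [← one_div, le_div_iff₀ hm]
  linarith

end IsMinkowskiNorm

theorem inter_add_eq_of_add_subset {C : Set V} {X Y : Submodule ℝ V} (hXY : X ⊔ Y = ⊤)
    (hC : C + (Y : Set V) ⊆ C) : C ∩ (X : Set V) + (Y : Set V) = C := by
  refine (add_subset_add_right inter_subset_left).trans hC |>.antisymm fun w hw ↦ ?_
  obtain ⟨x, hx, y, hy, rfl⟩ := mem_sup.1 (hXY ▸ mem_top : w ∈ X ⊔ Y)
  refine ⟨x, ⟨?_, hx⟩, y, hy, rfl⟩
  simpa using hC ⟨_, hw, -y, Y.neg_mem hy, rfl⟩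

theorem mem_add_iff_projection_mem {K : Set V} {X Y : Submodule ℝ V} (hXY : IsCompl X Y)
    (hK : K ⊆ X) {w : V} : w ∈ K + (Y : Set V) ↔ X.projection Y hXY w ∈ K := by
  constructor
  · rintro ⟨x, hx, y, hy, rfl⟩
    simpa [projection_apply_of_mem_left hXY (hK hx),
      projection_apply_of_mem_right hXY hy] using hx
  · exact fun hw ↦ ⟨_, hw, _, sub_projection_mem hXY w, add_sub_cancel _ _⟩

namespace CoincideNear

variable {B₁ B₂ B₃ : Set V} {X : Submodule ℝ V}

theorem symm (h : CoincideNear B₁ B₂ X) : CoincideNear B₂ B₁ X :=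
  let ⟨U, hU, hXU, hBU⟩ := h
  ⟨U, hU, hXU, hBU.symm⟩

theorem trans (h₁₂ : CoincideNear B₁ B₂ X) (h₂₃ : CoincideNear B₂ B₃ X) :
    CoincideNear B₁ B₃ X := by
  obtain ⟨U, hU, hXU, hBU⟩ := h₁₂
  obtain ⟨U', hU', hXU', hBU'⟩ := h₂₃
  refine ⟨U ∩ U', hU.inter hU', subset_inter hXU hXU', ?_⟩
  rw [← inter_assoc, hBU, inter_right_comm, hBU', inter_right_comm, inter_assoc]

theorem inter_eq (h : CoincideNear B₁ B₂ X) : B₁ ∩ X = B₂ ∩ X := by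
  obtain ⟨U, -, hXU, hBU⟩ := h
  rw [← inter_eq_right.2 hXU, ← inter_assoc, hBU, inter_assoc]

theorem of_inter_subset {U F : Set V} (hU : IsOpen U) (hF : IsClosed F) (hBU : B₁ ∩ U = B₂ ∩ U)
    (h₁ : B₁ ⊆ F) (h₂ : B₂ ⊆ F) (hX : (X : Set V) ∩ F ⊆ U) : CoincideNear B₁ B₂ X := by
  refine ⟨U ∪ Fᶜ, hU.union hF.isOpen_compl, fun x hx ↦ ?_, ?_⟩
  · by_cases hxF : x ∈ F
    exacts [Or.inl (hX ⟨hx, hxF⟩), Or.inr hxF]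
  · rw [inter_union_distrib_left, inter_union_distrib_left, hBU,
      (disjoint_compl_right.mono_left h₁).inter_eq, (disjoint_compl_right.mono_left h₂).inter_eq]

end CoincideNear

theorem eventually_norm_sub_le_mul_norm_of_mem_span {k : ℕ} {v : Fin k → V}
    (hv : LinearIndependent ℝ v) (P : V →L[ℝ] V) (hP : ∀ i, P (v i) = v i) {η : ℝ}
    (hη : 0 < η) : ∀ᶠ v' in 𝓝 v, ∀ w ∈ span ℝ (range v'), ‖w - P w‖ ≤ η * ‖P w‖ := by
  let L := (ContinuousLinearEquiv.piRing (𝕜 := ℝ) (E := V) (Fin k)).symm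
  have hL : ∀ v' c, L v' c = ∑ i, c i • v' i := fun v' c ↦
    LinearEquiv.piRing_symm_apply (R := ℝ) (S := ℝ) v' c
  obtain ⟨K, -, hKL⟩ := (L v).toLinearMap.injective_iff_antilipschitz.1 fun c c' hcc' ↦
    linearIndependent_iff_injective_fintypeLinearCombination.1 hv (by
      simpa only [Fintype.linearCombination_apply, ContinuousLinearMap.coe_coe, hL] using hcc')
  set Q := ContinuousLinearMap.id ℝ V - P
  have hPL : ∀ c, P (L v c) = L v c := fun c ↦ by simp [hL, hP]
  have hD : Tendsto (fun v' ↦ ‖L v' - L v‖) (𝓝 v) (𝓝 0) := by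
    simpa using ((L.continuous.tendsto v).sub_const (L v)).norm
  filter_upwards [(hD.const_mul (K * ‖P‖)).eventually_lt_const (by simp : K * ‖P‖ * 0 < 1 / 2),
    (hD.const_mul (2 * K * ‖Q‖)).eventually_lt_const (by simpa using hη)] with v' hP' hQ' w hw
  obtain ⟨c, rfl⟩ := (mem_span_range_iff_exists_fun ℝ).1 hw
  set D := L v' - L v
  have hsplit : ∑ i, c i • v' i = L v c + D c := by simp [D, hL]
  have hDc : ‖D c‖ ≤ ‖D‖ * ‖c‖ := D.le_opNorm c
  have hc : ‖c‖ ≤ 2 * K * ‖P (∑ i, c i • v' i)‖ := by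
    have hLc : ‖L v c‖ ≤ ‖P (∑ i, c i • v' i)‖ + ‖P‖ * (‖D‖ * ‖c‖) := by
      calc ‖L v c‖ = ‖P (∑ i, c i • v' i) - P (D c)‖ := by simp [hsplit, hPL]
        _ ≤ ‖P (∑ i, c i • v' i)‖ + ‖P (D c)‖ := norm_sub_le _ _
        _ ≤ _ := by gcongr; exact (P.le_opNorm _).trans (by gcongr)
    have hcL : ‖c‖ ≤ K * ‖L v c‖ := hKL.le_mul_norm (map_zero _) c
    nlinarith [mul_le_mul_of_nonneg_left hLc K.coe_nonneg,
      mul_le_mul_of_nonneg_right hP'.le (norm_nonneg c)]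
  calc ‖∑ i, c i • v' i - P (∑ i, c i • v' i)‖ = ‖Q (D c)‖ := by simp [Q, hsplit, hPL]
    _ ≤ ‖Q‖ * (‖D‖ * ‖c‖) := (Q.le_opNorm _).trans (by gcongr)
    _ ≤ η * ‖P (∑ i, c i • v' i)‖ := by
      nlinarith [norm_nonneg Q, norm_nonneg D, norm_nonneg (P (∑ i, c i • v' i)),
        mul_nonneg (norm_nonneg Q) (norm_nonneg D)]

variable [FiniteDimensional ℝ V]

theorem IsCylinder.exists_isCompl_eq_inter_add {k : ℕ} {B C : Set V} {X : Submodule ℝ V}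
    (hC : IsCylinder k C) (hB : IsBounded B) (h0 : 0 ∈ B) (hX : finrank ℝ X = k)
    (hCX : C ∩ X = B ∩ X) : ∃ Y : Submodule ℝ V, IsCompl X Y ∧ C = B ∩ X + (Y : Set V) := by
  obtain ⟨K, W, hW, -, -, -, -, Y, hWY, rfl⟩ := hC
  have hadd : K + (Y : Set V) + Y ⊆ K + Y := by
    rw [add_assoc]
    exact add_subset_add_left (by simp)
  have hdisj : Disjoint X Y := by
    refine disjoint_def.2 fun y hyX hyY ↦ eq_zero_of_forall_add_mem (hB.subset inter_subset_left)
      ⟨h0, X.zero_mem⟩ fun x hx ↦ ?_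
    rw [← hCX] at hx ⊢
    exact ⟨hadd ⟨x, hx.1, y, hyY, rfl⟩, X.add_mem hx.2 hyX⟩
  have hXY : IsCompl X Y := (isCompl_iff_disjoint X Y (by
    rw [← finrank_add_eq_of_isCompl hWY, hW, hX])).2 hdisj
  exact ⟨Y, hXY, by rw [← hCX, inter_add_eq_of_add_subset hXY.sup_eq_top hadd]⟩

theorem le_of_coincideNear_add {K : Set V} {X Y₁ Y₂ : Submodule ℝ V} (hK : IsBounded K)
    (h0 : 0 ∈ K) (hKX : K ⊆ X) (hXY₁ : IsCompl X Y₁)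
    (h : CoincideNear (K + (Y₂ : Set V)) (K + (Y₁ : Set V)) X) : Y₂ ≤ Y₁ := by
  obtain ⟨U, hU, hXU, hYU⟩ := h
  obtain ⟨R, hR⟩ := hK.exists_norm_le
  obtain ⟨ε, hε, hεU⟩ := ((isCompact_closedBall (0 : V) R).inter_left X.closed_of_finiteDimensional
    |>.exists_thickening_subset_open hU fun x hx ↦ hXU hx.1)
  have hsmall : ∀ y ∈ Y₂, ‖y‖ < ε → y ∈ Y₁ := fun y hy hyε ↦ by
    rw [← projection_apply_eq_zero_iff hXY₁]
    refine eq_zero_of_forall_add_mem hK h0 fun x hx ↦ ?_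
    have hxy : x + y ∈ U := hεU <| mem_thickening_iff.2
      ⟨x, ⟨hKX hx, mem_closedBall_zero_iff.2 (hR x hx)⟩, by simpa [dist_eq_norm] using hyε⟩
    have := (hYU.subset ⟨⟨x, hx, y, hy, rfl⟩, hxy⟩).1
    rwa [mem_add_iff_projection_mem hXY₁ hKX, map_add,
      projection_apply_of_mem_left hXY₁ (hKX hx)] at this
  intro y hy
  obtain ⟨t, ht, hty⟩ := exists_pos_mul_lt hε ‖y‖
  refine (smul_mem_iff _ ht.ne').1 (hsmall _ (Y₂.smul_mem t hy) ?_)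
  rwa [norm_smul, Real.norm_of_nonneg ht.le, mul_comm]

theorem IsCylinder.eq_of_coincideNear {k : ℕ} {B C₁ C₂ : Set V} {X : Submodule ℝ V}
    (hB : IsBounded B) (h0 : 0 ∈ B) (hX : finrank ℝ X = k) (hC₁ : IsCylinder k C₁)
    (hC₂ : IsCylinder k C₂) (h₁ : CoincideNear B C₁ X) (h₂ : CoincideNear B C₂ X) : C₁ = C₂ := by
  obtain ⟨Y₁, hXY₁, rfl⟩ := hC₁.exists_isCompl_eq_inter_add hB h0 hX h₁.inter_eq.symm
  obtain ⟨Y₂, hXY₂, rfl⟩ := hC₂.exists_isCompl_eq_inter_add hB h0 hX h₂.inter_eq.symm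
  have hK : IsBounded (B ∩ X) := hB.subset inter_subset_left
  have h₁₂ := h₁.symm.trans h₂
  rw [le_antisymm (le_of_coincideNear_add hK ⟨h0, X.zero_mem⟩ inter_subset_right hXY₂ h₁₂)
    (le_of_coincideNear_add hK ⟨h0, X.zero_mem⟩ inter_subset_right hXY₁ h₁₂.symm)]

theorem IsCylinder.eventually_coincideNear_span {k : ℕ} {B C : Set V} (hC : IsCylinder k C)
    (hB : IsBounded B) (h0 : 0 ∈ B) {v : Fin k → V} (hv : LinearIndependent ℝ v)
    (h : CoincideNear B C (span ℝ (range v))) :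
    ∀ᶠ v' in 𝓝 v, CoincideNear B C (span ℝ (range v')) := by
  set X := span ℝ (range v)
  obtain ⟨Y, hXY, rfl⟩ := hC.exists_isCompl_eq_inter_add hB h0
    (by rw [finrank_span_eq_card hv, Fintype.card_fin]) h.inter_eq.symm
  obtain ⟨U, hU, hXU, hBU⟩ := h
  let P : V →L[ℝ] V := (X.projection Y hXY).toContinuousLinearMap
  have hPX : ∀ x ∈ X, P x = x := fun x hx ↦ projection_apply_of_mem_left hXY hx
  set S := closure (P '' B)
  have hS : IsCompact S := (P.lipschitz.isBounded_image hB).isCompact_closure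
  have hSX : S ⊆ X := closure_minimal (image_subset_iff.2 fun b _ ↦ projection_apply_mem hXY b)
    X.closed_of_finiteDimensional
  obtain ⟨ε, hε, hεU⟩ := hS.exists_thickening_subset_open hU (hSX.trans hXU)
  obtain ⟨r, hr, hSr⟩ := hS.isBounded.exists_pos_norm_le
  filter_upwards [eventually_norm_sub_le_mul_norm_of_mem_span hv P
    (fun i ↦ hPX _ (subset_span (mem_range_self i))) (by positivity : 0 < ε / (2 * r))]
    with v' hv'
  refine .of_inter_subset hU (isClosed_closure.preimage P.continuous) hBU
    (fun b hb ↦ subset_closure (mem_image_of_mem P hb)) (fun w hw ↦ ?_) fun w ⟨hw, hPw⟩ ↦ ?_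
  · have hPw := (mem_add_iff_projection_mem hXY inter_subset_right).1 hw
    exact subset_closure ⟨_, hPw.1, hPX _ hPw.2⟩
  · refine hεU (mem_thickening_iff.2 ⟨P w, hPw, ?_⟩)
    calc dist w (P w) ≤ ε / (2 * r) * ‖P w‖ := by rw [dist_eq_norm]; exact hv' w hw
      _ ≤ ε / (2 * r) * r := by gcongr; exact hSr _ hPw
      _ < ε := by field_simp; linarith

theorem IsCylinder.isOpen_setOf_coincideNear {k : ℕ} {B C : Set V} (hC : IsCylinder k C)
    (hB : IsBounded B) (h0 : 0 ∈ B) : IsOpen {X : Gr k V | CoincideNear B C X.1} := by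
  refine isOpen_coinduced.2 (isOpen_iff_mem_nhds.2 fun ⟨v, hv⟩ hX ↦ ?_)
  exact (continuous_subtype_val.tendsto _).eventually (hC.eventually_coincideNear_span hB h0 hv hX)

end

theorem propagation_of_local_cylindricity_general
    {V : Type*} [NormedAddCommGroup V] [NormedSpace ℝ V] [FiniteDimensional ℝ V]
    (k : ℕ)
    (Φ : V → ℝ) (hΦ : IsMinkowskiNorm Φ) (B : Set V) (hB : B = {v | Φ v ≤ 1})
    (𝒰 : Set (Gr k V)) (h𝒰conn : IsConnected 𝒰)
    (h : ∀ X ∈ 𝒰, IsLocallyCylindricalNear k B X.1) :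
    ∃ C : Set V, IsCylinder k C ∧
      ∀ X ∈ 𝒰, B ∩ (X.1 : Set V) = C ∩ (X.1 : Set V) := by
  have hbdd : IsBounded B := hB ▸ hΦ.isBounded_setOf_le_one
  have h0 : (0 : V) ∈ B := by simp [hB, hΦ.map_zero]
  have hlocal : ∀ X ∈ 𝒰, ∀ᶠ X' in 𝓝[𝒰] X,
      (∀ C, IsCylinder k C → CoincideNear B C X.1 → CoincideNear B C X'.1) ∧
      (∀ C, IsCylinder k C → CoincideNear B C X'.1 → CoincideNear B C X.1) := by
    intro X hX
    obtain ⟨C₀, hC₀, hXC₀⟩ := h X hX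
    filter_upwards [mem_nhdsWithin_of_mem_nhds
      ((hC₀.isOpen_setOf_coincideNear hbdd h0).mem_nhds hXC₀)] with X' hX'C₀
    exact ⟨fun C hC hXC ↦ hC.eq_of_coincideNear hbdd h0 X.2 hC₀ hXC hXC₀ ▸ hX'C₀,
      fun C hC hX'C ↦ hC.eq_of_coincideNear hbdd h0 X'.2 hC₀ hX'C hX'C₀ ▸ hXC₀⟩
  obtain ⟨X₀, hX₀⟩ := h𝒰conn.nonempty
  obtain ⟨C, hC, hX₀C⟩ := h X₀ hX₀
  refine ⟨C, hC, fun X hX ↦ CoincideNear.inter_eq ?_⟩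
  exact h𝒰conn.isPreconnected.induction₂' _ hlocal (fun _ _ _ _ _ _ h₁ h₂ C hC hC' ↦
    h₂ C hC (h₁ C hC hC')) hX₀ hX C hC hX₀C

/-- **Propagation of local cylindricity.** If the unit ball `B` is locally cylindrical
near every `X` in a nonempty connected open set `𝒰`, then there is a single `k`-cylinder
`C` with `B ∩ X = C ∩ X` for all `X ∈ 𝒰`. -/
theorem propagation_of_local_cylindricity
    {V : Type*} [NormedAddCommGroup V] [NormedSpace ℝ V] [FiniteDimensional ℝ V]
    (n k : ℕ) (hn : Module.finrank ℝ V = n)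
    (Φ : V → ℝ) (hΦ : IsMinkowskiNorm Φ) (B : Set V) (hB : B = {v | Φ v ≤ 1})
    (𝒰 : Set (Gr k V)) (h𝒰open : IsOpen 𝒰) (h𝒰conn : IsConnected 𝒰)
    (h : ∀ X ∈ 𝒰, IsLocallyCylindricalNear k B X.1) :
    ∃ C : Set V, IsCylinder k C ∧
      ∀ X ∈ 𝒰, B ∩ (X.1 : Set V) = C ∩ (X.1 : Set V) :=
  propagation_of_local_cylindricity_general k Φ hΦ B hB 𝒰 h𝒰conn h
end

section
/- Let B be the unit ball of a Minkowski norm on an n-dimensional real vector space V and let X be a k-dimensional linear subspace of V with k < n. Suppose that for every (k+1)-dimensional linear subspace W of V containing X, the intersection B ∩ W is locally cylindrical near X (as a subset of W). Then B is locally cylindrical near X. -/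
/-!
For a direction `z ∉ X`, the cylinder coinciding with `B ∩ (X + ℝz)` near `X` is invariant
under translation by some `y ≠ 0`, and `y ∉ X` because `B` contains no line. Since `B ∩ X` is
compact, short translates of it along `±y` stay in the neighbourhood where `B` and the cylinder
agree, so `B ∩ X ± y ⊆ B` after rescaling `y`. Doing this over a basis of `V ⧸ X` gives vectors
`yᵢ` spanning a complement `Y` of `X`, and by convexity `B ∩ X + w ⊆ B` for all `w` in the
cross-polytope spanned by the `±yᵢ`: this is the inclusion `(B ∩ X + Y) ∩ U ⊆ B` for a
neighbourhood `U` of `X`. Conversely, if `x + w ∈ B` with `x ∈ X`, `w ∈ Y`, averaging it with a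
point of `B ∩ X - δw` cancels `w`, and homogeneity of `Φ` along `ℝx` then forces `x ∈ B`.
-/

open Module Set Pointwise

namespace IsMinkowskiSeminorm

variable {E : Type*} [AddCommGroup E] [Module ℝ E] {Φ : E → ℝ}

lemma map_zero (hΦ : IsMinkowskiSeminorm Φ) : Φ 0 = 0 := by
  simpa using hΦ.2.1 0 0 le_rfl

lemma convexOn (hΦ : IsMinkowskiSeminorm Φ) : ConvexOn ℝ univ Φ :=
  ⟨convex_univ, fun x _ y _ a b ha hb _ => by
    calc Φ (a • x + b • y) ≤ Φ (a • x) + Φ (b • y) := hΦ.2.2 _ _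
      _ = a • Φ x + b • Φ y := by rw [hΦ.2.1 a x ha, hΦ.2.1 b y hb, smul_eq_mul, smul_eq_mul]⟩

lemma convex_le_one (hΦ : IsMinkowskiSeminorm Φ) : Convex ℝ {v | Φ v ≤ 1} := by
  simpa using hΦ.convexOn.convex_le 1

lemma le_one_of_add_le_one (hΦ : IsMinkowskiSeminorm Φ) {x w : E} {δ : ℝ} (hδ : 0 < δ)
    (hxw : Φ (x + w) ≤ 1) (h : ∀ s : ℝ, 0 ≤ s → Φ (s • x) ≤ 1 → Φ (s • x - δ • w) ≤ 1) :
    Φ x ≤ 1 := by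
  by_contra! hx
  have hx0 : 0 < Φ x := one_pos.trans hx
  have hκ := h (Φ x)⁻¹ (by positivity)
    (by rw [hΦ.2.1 _ _ (by positivity), inv_mul_cancel₀ hx0.ne'])
  have hmem := hΦ.convex_le_one hxw hκ (a := δ / (1 + δ)) (b := 1 / (1 + δ)) (by positivity)
    (by positivity) (by field_simp; ring)
  have hvec : (δ / (1 + δ)) • (x + w) + (1 / (1 + δ)) • ((Φ x)⁻¹ • x - δ • w)
      = ((δ + (Φ x)⁻¹) / (1 + δ)) • x := by
    match_scalars
    · field_simp
    · ring
  simp only [Set.mem_ofPred_eq, hvec, hΦ.2.1 _ _ (by positivity : 0 ≤ (δ + (Φ x)⁻¹) / (1 + δ))]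
    at hmem
  rw [div_mul_eq_mul_div, div_le_one (by positivity), add_mul, inv_mul_cancel₀ hx0.ne'] at hmem
  nlinarith

end IsMinkowskiSeminorm

lemma IsMinkowskiNorm.comp_injective {E F : Type*} [AddCommGroup E] [Module ℝ E]
    [AddCommGroup F] [Module ℝ F] {Φ : E → ℝ} (hΦ : IsMinkowskiNorm Φ) {f : F →ₗ[ℝ] E}
    (hf : Function.Injective f) : IsMinkowskiNorm (Φ ∘ f) :=
  ⟨⟨fun v => hΦ.1.1 _, fun c v hc => by simpa using hΦ.1.2.1 c (f v) hc,
    fun v w => by simpa using hΦ.1.2.2 (f v) (f w)⟩,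
    fun v hv => hΦ.2 _ ((map_ne_zero_iff f hf).2 hv)⟩

section FiniteDimensional

variable {E : Type*} [NormedAddCommGroup E] [NormedSpace ℝ E] [FiniteDimensional ℝ E]
  {Φ : E → ℝ}

lemma IsMinkowskiSeminorm.continuous (hΦ : IsMinkowskiSeminorm Φ) : Continuous Φ := by
  simpa [continuousOn_univ] using hΦ.convexOn.continuousOn_interior

lemma IsMinkowskiNorm.exists_pos_mul_norm_le (hΦ : IsMinkowskiNorm Φ) :
    ∃ c > 0, ∀ v, c * ‖v‖ ≤ Φ v := by
  rcases subsingleton_or_nontrivial E with hE | hE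
  · exact ⟨1, one_pos, fun v => by simpa [Subsingleton.elim v 0] using hΦ.1.1 0⟩
  obtain ⟨v₀, hv₀, hmin⟩ := (isCompact_sphere (0 : E) 1).exists_isMinOn
    (NormedSpace.sphere_nonempty.mpr zero_le_one) hΦ.1.continuous.continuousOn
  have hv₀ : ‖v₀‖ = 1 := by simpa using hv₀
  refine ⟨Φ v₀, hΦ.2 v₀ (norm_ne_zero_iff.1 (by simp [hv₀])), fun v => ?_⟩
  rcases eq_or_ne v 0 with rfl | hv
  · simp [hΦ.1.map_zero]
  have hnv : 0 < ‖v‖ := norm_pos_iff.2 hv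
  have := hmin (a := ‖v‖⁻¹ • v) (by simp [norm_smul, hnv.ne'])
  rw [Set.mem_ofPred_eq, hΦ.1.2.1 _ _ (inv_nonneg.2 hnv.le)] at this
  calc Φ v₀ * ‖v‖ ≤ ‖v‖⁻¹ * Φ v * ‖v‖ := by gcongr
    _ = Φ v := by field_simp

lemma IsMinkowskiNorm.isCompact_le_one (hΦ : IsMinkowskiNorm Φ) : IsCompact {v | Φ v ≤ 1} := by
  obtain ⟨c, hc, hle⟩ := hΦ.exists_pos_mul_norm_le
  refine Metric.isCompact_of_isClosed_isBounded (isClosed_le hΦ.1.continuous continuous_const)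
    ((Metric.isBounded_closedBall (x := 0) (r := c⁻¹)).subset fun v hv => ?_)
  simpa using (le_inv_mul_iff₀ hc).2 ((hle v).trans hv)

end FiniteDimensional

def minkowskiDiff {E : Type*} [Add E] (B K : Set E) : Set E := {w | ∀ x ∈ K, x + w ∈ B}

section MinkowskiDiff

variable {E : Type*} [AddCommGroup E] [Module ℝ E] {B K : Set E}

lemma Convex.minkowskiDiff (hB : Convex ℝ B) : Convex ℝ (minkowskiDiff B K) := by
  intro w₁ hw₁ w₂ hw₂ a b ha hb hab x hx
  convert hB (hw₁ x hx) (hw₂ x hx) ha hb hab using 1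
  rw [smul_add, smul_add, add_add_add_comm, ← add_smul, hab, one_smul]

lemma Convex.sum_smul_mem_of_sum_abs_le_one {ι : Type*} [Fintype ι] {S : Set E}
    (hS : Convex ℝ S) (h0 : (0 : E) ∈ S) {v : ι → E} (hv : ∀ i, v i ∈ S ∧ -v i ∈ S)
    {c : ι → ℝ} (hc : ∑ i, |c i| ≤ 1) : ∑ i, c i • v i ∈ S := by
  classical
  let w : Option ι → ℝ := fun j => j.elim (1 - ∑ i, |c i|) (|c ·|)
  let p : Option ι → E := fun j => j.elim 0 fun i => if 0 ≤ c i then v i else -v i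
  have hp : ∀ i, |c i| • (if 0 ≤ c i then v i else -v i) = c i • v i := by
    intro i
    split_ifs with h
    · rw [abs_of_nonneg h]
    · rw [abs_of_neg (not_le.1 h), smul_neg, neg_smul, neg_neg]
  convert hS.sum_mem (t := Finset.univ) (w := w) (z := p) ?_ ?_ ?_ using 1
  · simp [w, p, Fintype.sum_option, hp]
  · rintro (_ | i) -
    · simpa [w] using hc
    · exact abs_nonneg _
  · simp [w, Fintype.sum_option]
  · rintro (_ | i) -
    · exact h0
    · simp only [p, Option.elim]
      split_ifs
      exacts [(hv i).1, (hv i).2]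

end MinkowskiDiff

lemma Submodule.exists_ne_zero_mkQ_eq_smul {R M : Type*} [Field R] [AddCommGroup M]
    [Module R M] {X : Submodule R M} {y z : M} (hy : y ∈ X ⊔ span R {z}) (hyX : y ∉ X) :
    ∃ c : R, c ≠ 0 ∧ X.mkQ y = c • X.mkQ z := by
  obtain ⟨x, hx, _, hw, rfl⟩ := Submodule.mem_sup.1 hy
  obtain ⟨c, rfl⟩ := Submodule.mem_span_singleton.1 hw
  refine ⟨c, fun hc => hyX (by simpa [hc] using hx), ?_⟩
  simp [(Submodule.Quotient.mk_eq_zero X).2 hx]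

lemma Submodule.isCompl_range_of_rightInverse_mkQ {R M : Type*} [Ring R] [AddCommGroup M]
    [Module R M] {X : Submodule R M} {σ : M ⧸ X →ₗ[R] M}
    (hσ : Function.RightInverse σ X.mkQ) : IsCompl X (LinearMap.range σ) := by
  constructor
  · rw [Submodule.disjoint_def]
    rintro _ hx ⟨u, rfl⟩
    obtain rfl : u = 0 := by rw [← hσ u]; exact (Submodule.Quotient.mk_eq_zero X).2 hx
    exact map_zero σ
  · rw [codisjoint_iff, eq_top_iff]
    intro v _
    rw [← sub_add_cancel v (σ (X.mkQ v))]
    refine Submodule.add_mem_sup ?_ (LinearMap.mem_range_self σ _)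
    rw [← Submodule.Quotient.mk_eq_zero X, Submodule.Quotient.mk_sub]
    exact sub_eq_zero.2 (hσ (X.mkQ v)).symm

lemma Module.Basis.rightInverse_constr_mkQ {R M ι : Type*} [CommRing R] [AddCommGroup M]
    [Module R M] {X : Submodule R M} (b : Basis ι R (M ⧸ X)) {y : ι → M}
    (hy : ∀ i, X.mkQ (y i) = b i) : Function.RightInverse (b.constr R y) X.mkQ :=
  LinearMap.congr_fun (b.ext (f₁ := X.mkQ ∘ₗ b.constr R y) (f₂ := LinearMap.id) fun i => by
    simp [hy])

lemma IsCylinder.exists_ne_zero_add_smul_mem {E : Type*} [AddCommGroup E] [Module ℝ E]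
    [TopologicalSpace E] [FiniteDimensional ℝ E] {k : ℕ} {C : Set E} (hC : IsCylinder k C)
    (hk : k < finrank ℝ E) : ∃ y ≠ 0, ∀ x ∈ C, ∀ t : ℝ, x + t • y ∈ C := by
  obtain ⟨K, X, hX, -, -, -, -, Y, hXY, rfl⟩ := hC
  have hY : Y ≠ ⊥ := by
    rintro rfl
    have := Submodule.finrank_add_eq_of_isCompl hXY
    simp only [finrank_bot] at this
    omega
  obtain ⟨y, hyY, hy⟩ := Submodule.exists_mem_ne_zero_of_ne_bot hY
  refine ⟨y, hy, ?_⟩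
  rintro _ ⟨a, ha, b, hb, rfl⟩ t
  rw [add_assoc]
  exact Set.add_mem_add ha (Y.add_mem hb (Y.smul_mem t hyY))

section CoincideNear

variable {E : Type*} [NormedAddCommGroup E] [NormedSpace ℝ E] {B C : Set E}
  {X : Submodule ℝ E} {y : E}

lemma CoincideNear.exists_smul_mem_minkowskiDiff (hBC : CoincideNear B C X)
    (hK : IsCompact (B ∩ X)) (hC : ∀ x ∈ C, ∀ t : ℝ, x + t • y ∈ C) :
    ∃ ε : ℝ, 0 < ε ∧ ε • y ∈ minkowskiDiff B (B ∩ X) ∧ -(ε • y) ∈ minkowskiDiff B (B ∩ X) := by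
  obtain ⟨U, hU, hXU, hBU⟩ := hBC
  have hKU : B ∩ X ⊆ U := fun x hx => hXU hx.2
  obtain ⟨δ, hδ, hδU⟩ := hK.exists_thickening_subset_open hU hKU
  have key : ∀ t : ℝ, |t| * ‖y‖ < δ → t • y ∈ minkowskiDiff B (B ∩ X) := by
    intro t ht x hx
    have hxC : x ∈ C := (hBU ▸ ⟨hx.1, hKU hx⟩ : x ∈ C ∩ U).1
    have hxU : x + t • y ∈ U := hδU (Metric.mem_thickening_iff.2
      ⟨x, hx, by rwa [dist_eq_norm, add_sub_cancel_left, norm_smul, Real.norm_eq_abs]⟩)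
    exact (hBU.symm ▸ ⟨hC x hxC t, hxU⟩ : x + t • y ∈ B ∩ U).1
  set ε := δ / (‖y‖ + 1)
  have hε : 0 < ε := by positivity
  have hεy : ε * ‖y‖ < δ := by
    rw [div_mul_eq_mul_div, div_lt_iff₀ (by positivity)]
    nlinarith [norm_nonneg y]
  refine ⟨ε, hε, key ε (by rwa [abs_of_pos hε]), ?_⟩
  rw [← neg_smul]
  exact key (-ε) (by rwa [abs_neg, abs_of_pos hε])

lemma CoincideNear.notMem_of_add_smul_mem {Φ : E → ℝ} (hΦ : IsMinkowskiNorm Φ)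
    (hBC : CoincideNear {v | Φ v ≤ 1} C X) (hC : ∀ x ∈ C, ∀ t : ℝ, x + t • y ∈ C)
    (hy : y ≠ 0) : y ∉ X := by
  obtain ⟨U, -, hXU, hBU⟩ := hBC
  intro hyX
  have hΦy := hΦ.2 y hy
  have h0C : (0 : E) ∈ C :=
    (hBU ▸ ⟨by simp [hΦ.1.map_zero], hXU X.zero_mem⟩ : (0 : E) ∈ C ∩ U).1
  have hmem : (2 / Φ y) • y ∈ C ∩ U :=
    ⟨by simpa using hC 0 h0C (2 / Φ y), hXU (X.smul_mem _ hyX)⟩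
  rw [← hBU] at hmem
  have hle := hmem.1
  simp only [Set.mem_ofPred_eq, hΦ.1.2.1 _ _ (by positivity : (0 : ℝ) ≤ 2 / Φ y),
    div_mul_cancel₀ _ hΦy.ne'] at hle
  norm_num at hle

end CoincideNear

lemma exists_mem_notMem_minkowskiDiff_of_isLocallyCylindricalNear {V : Type*}
    [NormedAddCommGroup V] [NormedSpace ℝ V] [FiniteDimensional ℝ V] {Φ : V → ℝ}
    (hΦ : IsMinkowskiNorm Φ) {k : ℕ} {X W : Submodule ℝ V} (hW : finrank ℝ W = k + 1)
    (hXW : X ≤ W)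
    (h : IsLocallyCylindricalNear k (((↑) : W → V) ⁻¹' {v | Φ v ≤ 1}) (X.comap W.subtype)) :
    ∃ y ∈ W, y ∉ X ∧ y ∈ minkowskiDiff {v | Φ v ≤ 1} ({v | Φ v ≤ 1} ∩ X) ∧
      -y ∈ minkowskiDiff {v | Φ v ≤ 1} ({v | Φ v ≤ 1} ∩ X) := by
  obtain ⟨C, hC, hBC⟩ := h
  obtain ⟨y, hy0, hyC⟩ := hC.exists_ne_zero_add_smul_mem (by omega)
  have hΦW : IsMinkowskiNorm (Φ ∘ W.subtype) := hΦ.comp_injective W.injective_subtype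
  have hyX := hBC.notMem_of_add_smul_mem hΦW hyC hy0
  obtain ⟨ε, hε, hy_pos, hy_neg⟩ := hBC.exists_smul_mem_minkowskiDiff
    (hΦW.isCompact_le_one.inter_right (Submodule.closed_of_finiteDimensional _)) hyC
  have hD : ∀ w : W, w ∈ minkowskiDiff {v | (Φ ∘ W.subtype) v ≤ 1}
      ({v | (Φ ∘ W.subtype) v ≤ 1} ∩ X.comap W.subtype) →
      (w : V) ∈ minkowskiDiff {v | Φ v ≤ 1} ({v | Φ v ≤ 1} ∩ X) :=
    fun w hw x hx => hw ⟨x, hXW hx.2⟩ hx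
  refine ⟨ε • y, (ε • y).2, fun hεyX => hyX ?_, hD _ hy_pos, hD _ hy_neg⟩
  exact (Submodule.smul_mem_iff _ hε.ne').1 (show ε • (y : V) ∈ X from hεyX)

lemma exists_mkQ_eq_smul_mem_minkowskiDiff {V : Type*} [NormedAddCommGroup V]
    [NormedSpace ℝ V] [FiniteDimensional ℝ V] {Φ : V → ℝ} (hΦ : IsMinkowskiNorm Φ)
    {X : Submodule ℝ V}
    (h : ∀ W : Submodule ℝ V, finrank ℝ W = finrank ℝ X + 1 → X ≤ W →
      IsLocallyCylindricalNear (finrank ℝ X) (((↑) : W → V) ⁻¹' {v | Φ v ≤ 1})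
        (X.comap W.subtype))
    {u : V ⧸ X} (hu : u ≠ 0) :
    ∃ y : V, (y ∈ minkowskiDiff {v | Φ v ≤ 1} ({v | Φ v ≤ 1} ∩ X) ∧
      -y ∈ minkowskiDiff {v | Φ v ≤ 1} ({v | Φ v ≤ 1} ∩ X)) ∧
      ∃ c : ℝ, c ≠ 0 ∧ X.mkQ y = c • u := by
  obtain ⟨z, rfl⟩ := X.mkQ_surjective u
  have hzX : z ∉ X := fun hz => hu ((Submodule.Quotient.mk_eq_zero X).2 hz)
  have hW := Submodule.finrank_sup_span_singleton hzX
  obtain ⟨y, hyW, hyX, hyD⟩ := exists_mem_notMem_minkowskiDiff_of_isLocallyCylindricalNear hΦ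
    hW le_sup_left (h _ hW le_sup_left)
  exact ⟨y, hyD, Submodule.exists_ne_zero_mkQ_eq_smul hyW hyX⟩

section Gluing

open Filter Topology

variable {V : Type*} [NormedAddCommGroup V] [NormedSpace ℝ V] {Φ : V → ℝ}
  {X Y : Submodule ℝ V}

lemma coincideNear_inter_add_of_isCompl (hΦ : IsMinkowskiSeminorm Φ) (hXY : IsCompl X Y)
    {N : Set (V ⧸ X)} (hN : IsOpen (X.mkQ ⁻¹' N)) (hN0 : 0 ∈ N)
    (hYN : ∀ w ∈ Y, X.mkQ w ∈ N → w ∈ minkowskiDiff {v | Φ v ≤ 1} ({v | Φ v ≤ 1} ∩ X)) :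
    CoincideNear {v | Φ v ≤ 1} ({v | Φ v ≤ 1} ∩ X + Y) X := by
  have hXN : ∀ x ∈ X, X.mkQ x ∈ N := fun x hx => by
    rwa [Submodule.mkQ_apply, (Submodule.Quotient.mk_eq_zero X).2 hx]
  refine ⟨_, hN, hXN, Set.ext fun v => and_congr_left fun hvN => ⟨fun hv => ?_, ?_⟩⟩
  · obtain ⟨x, hx, w, hw, rfl⟩ :=
      Submodule.mem_sup.1 (hXY.sup_eq_top ▸ Submodule.mem_top (x := v))
    have hnear : ∀ᶠ t in 𝓝 (0 : ℝ), X.mkQ (-(t • w)) ∈ N :=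
      (continuous_id.smul continuous_const).neg.continuousAt.preimage_mem_nhds
        (hN.mem_nhds (by simpa using hN0))
    obtain ⟨δ, hδN, hδ⟩ :=
      ((hnear.filter_mono nhdsWithin_le_nhds).and self_mem_nhdsWithin).exists
        (f := 𝓝[>] (0 : ℝ))
    have hxB : Φ x ≤ 1 := hΦ.le_one_of_add_le_one hδ hv fun s hs hsx => by
      rw [sub_eq_add_neg]
      exact hYN _ (Y.neg_mem (Y.smul_mem δ hw)) hδN (s • x) ⟨hsx, X.smul_mem s hx⟩
    exact Set.add_mem_add ⟨hxB, hx⟩ hw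
  · rintro ⟨κ, hκ, w, hw, rfl⟩
    refine hYN w hw ?_ κ hκ
    simpa [(Submodule.Quotient.mk_eq_zero X).2 hκ.2] using hvN

variable [FiniteDimensional ℝ V]

lemma coincideNear_inter_add_range_constr (hΦ : IsMinkowskiSeminorm Φ) {ι : Type*} [Fintype ι]
    (b : Basis ι ℝ (V ⧸ X)) {y : ι → V} (hy : ∀ i, X.mkQ (y i) = b i)
    (hyD : ∀ i, y i ∈ minkowskiDiff {v | Φ v ≤ 1} ({v | Φ v ≤ 1} ∩ X) ∧
      -y i ∈ minkowskiDiff {v | Φ v ≤ 1} ({v | Φ v ≤ 1} ∩ X)) :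
    CoincideNear {v | Φ v ≤ 1} ({v | Φ v ≤ 1} ∩ X + LinearMap.range (b.constr ℝ y)) X := by
  have hσ := b.rightInverse_constr_mkQ hy
  refine coincideNear_inter_add_of_isCompl hΦ (Submodule.isCompl_range_of_rightInverse_mkQ hσ)
    (N := {u | ∑ i, |b.repr u i| < 1}) ?_ (by simp) ?_
  · exact isOpen_lt (continuous_finsetSum _ fun i _ =>
      ((b.coord i ∘ₗ X.mkQ).continuous_of_finiteDimensional).abs) continuous_const
  · rintro _ ⟨u, rfl⟩ hu
    rw [Set.mem_ofPred_eq, hσ u] at hu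
    rw [Basis.constr_apply_fintype]
    exact hΦ.convex_le_one.minkowskiDiff.sum_smul_mem_of_sum_abs_le_one
      (fun x hx => by simpa using hx.1) hyD hu.le

lemma IsMinkowskiNorm.isCylinderWithBase_inter_add (hΦ : IsMinkowskiNorm Φ)
    (hXY : IsCompl X Y) :
    IsCylinderWithBase (finrank ℝ X) ({v | Φ v ≤ 1} ∩ X + (Y : Set V)) ({v | Φ v ≤ 1} ∩ X) X := by
  refine ⟨rfl, Set.inter_subset_right, hΦ.isCompact_le_one.inter_right
    X.closed_of_finiteDimensional, hΦ.1.convex_le_one.inter X.convex, ⟨0, ?_⟩, Y, hXY, rfl⟩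
  have hopen : IsOpen {x : X | Φ x < 1} :=
    isOpen_lt (hΦ.1.continuous.comp continuous_subtype_val) continuous_const
  refine interior_mono (s := {x : X | Φ x < 1})
    (fun x (hx : Φ x < 1) => show Φ x ≤ 1 ∧ (x : V) ∈ X from ⟨hx.le, x.2⟩) ?_
  rw [hopen.interior_eq]
  simp [hΦ.1.map_zero]

end Gluing

theorem locally_cylindrical_in_subspaces_general
    {V : Type*} [NormedAddCommGroup V] [NormedSpace ℝ V] [FiniteDimensional ℝ V]
    (k : ℕ)
    (Φ : V → ℝ) (hΦ : IsMinkowskiNorm Φ) (B : Set V) (hB : B = {v | Φ v ≤ 1})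
    (X : Submodule ℝ V) (hX : Module.finrank ℝ X = k)
    (h : ∀ W : Submodule ℝ V, Module.finrank ℝ W = k + 1 → X ≤ W →
      IsLocallyCylindricalNear k (((↑) : W → V) ⁻¹' B) (X.comap W.subtype)) :
    IsLocallyCylindricalNear k B X := by
  subst hB hX
  let b := Module.finBasis ℝ (V ⧸ X)
  choose y hyD c hc hyc using fun i => exists_mkQ_eq_smul_mem_minkowskiDiff hΦ h (b.ne_zero i)
  let b' := b.isUnitSMul fun i => (hc i).isUnit
  have hy : ∀ i, X.mkQ (y i) = b' i := fun i => by rw [hyc, Module.Basis.isUnitSMul_apply]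
  have hσ := b'.rightInverse_constr_mkQ hy
  exact ⟨_, ⟨_, X, hΦ.isCylinderWithBase_inter_add
    (Submodule.isCompl_range_of_rightInverse_mkQ hσ)⟩,
    coincideNear_inter_add_range_constr hΦ.1 b' hy hyD⟩

/-- **Local cylindricity in codimension-one subspaces.** If for every `(k+1)`-dimensional
subspace `W` containing the `k`-dimensional subspace `X` the section `B ∩ W` is locally
cylindrical near `X` inside `W`, then `B` is locally cylindrical near `X`. -/
theorem locally_cylindrical_in_subspaces
    {V : Type*} [NormedAddCommGroup V] [NormedSpace ℝ V] [FiniteDimensional ℝ V]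
    (n k : ℕ) (hn : Module.finrank ℝ V = n) (hkn : k < n)
    (Φ : V → ℝ) (hΦ : IsMinkowskiNorm Φ) (B : Set V) (hB : B = {v | Φ v ≤ 1})
    (X : Submodule ℝ V) (hX : Module.finrank ℝ X = k)
    (h : ∀ W : Submodule ℝ V, Module.finrank ℝ W = k + 1 → X ≤ W →
      IsLocallyCylindricalNear k (((↑) : W → V) ⁻¹' B) (X.comap W.subtype)) :
    IsLocallyCylindricalNear k B X :=
  locally_cylindrical_in_subspaces_general k Φ hΦ B hB X hX h
end
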